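/- Let Ω ⊆ ℝ² be a compact set and P_1, …, P_ρ ⊆ ℝ² nonempty compact sets whose topological frontiers are Lebesgue-negligible. Let u_1, …, u_ρ : ℝ² × ℝ² → ℝ be continuous functions, a_1, …, a_ρ ∈ ℝ, and D, B : ℝ² → ℝ nonnegative integrable functions. Assume that for every Q = (q_1, …, q_ρ) ∈ Γ and all i ≠ j the set {q ∈ Ω : a_i + u_i(q, q_i) = a_j + u_j(q, q_j)} is Lebesgue-negligible, and assume Γ ≠ ∅. Let I_1, …, I_ρ, C_1, …, C_ρ, L : ℝ → ℝ be continuous functions. Define F(Q) = ∑_{i=1}^ρ [ I_i(∫_{q_i + P_i} B(q) dq) + C_i(∫_{Â_i(Q)} D(q) dq) ] + L(∫_{(q_1 + P_1) ∪ … ∪ (q_ρ + P_ρ)} D(q) dq). Then there exists Q* ∈ Γ such that F(Q*) ≤ F(Q) for all Q ∈ Γ, i.e., the bilevel location-allocation problem BL admits an optimal solution. -/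

import Mathlib

/-!
The set `Γ` of suitable solutions is closed, and since every `P i` is nonempty it lies in a
product of compact translates of `Ω`; hence it is compact. The objective is continuous on `Γ`:
as `Q' → Q`, membership of a point `x` in each integration domain (`Q' i + P i`, their union,
and the best-reply cells) is eventually constant unless `x` lies in a translate `Q i + ∂P i` or
in a tie set of `Q`, both null, so dominated convergence makes every integral continuous.
A continuous function on a nonempty compact set attains its minimum.
-/

open Set MeasureTheory Filter Topology

section Topology

variable {X : Type*} [TopologicalSpace X]

lemma eventually_mem_iff_of_notMem_frontier {s : Set X} {x : X} (hx : x ∉ frontier s) :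
    ∀ᶠ y in 𝓝 x, (y ∈ s ↔ x ∈ s) := by
  rw [← mem_compl_iff, compl_frontier_eq_union_interior] at hx
  rcases hx with hx | hx
  · filter_upwards [mem_interior_iff_mem_nhds.mp hx] with y hy
      using iff_of_true hy (interior_subset hx)
  · filter_upwards [mem_interior_iff_mem_nhds.mp hx] with y hy
      using iff_of_false hy (interior_subset hx)

lemma eventually_lt_iff_of_ne {α : Type*} [TopologicalSpace α] [LinearOrder α]
    [OrderClosedTopology α] {f g : X → α} {x : X} (hf : ContinuousAt f x)
    (hg : ContinuousAt g x) (hne : f x ≠ g x) :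
    ∀ᶠ y in 𝓝 x, (f y < g y ↔ f x < g x) := by
  rcases hne.lt_or_gt with h | h
  · filter_upwards [hf.eventually_lt hg h] with y hy using iff_of_true hy h
  · filter_upwards [hg.eventually_lt hf h] with y hy using iff_of_false hy.not_gt h.not_gt

end Topology

section Translate

variable {G : Type*} [TopologicalSpace G] [AddGroup G] [IsTopologicalAddGroup G]

lemma interior_image_add_left (q : G) (s : Set G) :
    interior ((fun p => q + p) '' s) = (fun p => q + p) '' interior s :=
  ((Homeomorph.addLeft q).image_interior s).symm

lemma eventually_mem_image_add_left_iff {s : Set G} {q x : G} (hx : -q + x ∉ frontier s) :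
    ∀ᶠ q' in 𝓝 q, (x ∈ (fun p => q' + p) '' s ↔ x ∈ (fun p => q + p) '' s) := by
  simp only [image_add_left, mem_preimage]
  exact ((continuous_neg.add continuous_const).tendsto q).eventually
    (eventually_mem_iff_of_notMem_frontier hx)

lemma isClosed_setOf_image_add_left_subset {Ω : Set G} (hΩ : IsClosed Ω) (s : Set G) :
    IsClosed {q : G | (fun p => q + p) '' s ⊆ Ω} := by
  have hset : {q : G | (fun p => q + p) '' s ⊆ Ω} = ⋂ p ∈ s, (· + p) ⁻¹' Ω := by
    ext q
    rw [mem_ofPred_eq, image_subset_iff]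
    simp only [subset_def, mem_preimage, mem_iInter₂]
  rw [hset]
  exact isClosed_biInter fun p _ => hΩ.preimage (continuous_add_const p)

lemma isClosed_setOf_interior_image_add_left_inter_eq_empty (s t : Set G) :
    IsClosed {q : G × G |
      interior ((fun p => q.1 + p) '' s) ∩ interior ((fun p => q.2 + p) '' t) = ∅} := by
  have hset : {q : G × G |
      interior ((fun p => q.1 + p) '' s) ∩ interior ((fun p => q.2 + p) '' t) = ∅} =
      ⋂ x, ({q : G × G | -q.1 + x ∈ interior s} ∩ {q | -q.2 + x ∈ interior t})ᶜ := by
    ext q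
    rw [mem_ofPred_eq, interior_image_add_left, interior_image_add_left]
    simp only [image_add_left, eq_empty_iff_forall_notMem, mem_inter_iff, mem_preimage,
      mem_iInter, mem_compl_iff, mem_ofPred_eq]
  rw [hset]
  exact isClosed_iInter fun x =>
    ((isOpen_interior.preimage (continuous_fst.neg.add continuous_const)).inter
      (isOpen_interior.preimage (continuous_snd.neg.add continuous_const))).isClosed_compl

end Translate

def suitableSolutions {ι G : Type*} [TopologicalSpace G] [Add G] (Ω : Set G)
    (P : ι → Set G) : Set (ι → G) :=
  {Q | (∀ i, (fun p => Q i + p) '' P i ⊆ Ω) ∧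
    ∀ i j, i ≠ j →
      interior ((fun p => Q i + p) '' P i) ∩ interior ((fun p => Q j + p) '' P j) = ∅}

section SuitableSolutions

variable {ι G : Type*} [TopologicalSpace G] [AddGroup G] [IsTopologicalAddGroup G]
  {Ω : Set G}

lemma isClosed_suitableSolutions (hΩ : IsClosed Ω) (P : ι → Set G) :
    IsClosed (suitableSolutions Ω P) := by
  simp only [suitableSolutions, ofPred_and, ofPred_forall]
  refine .inter (isClosed_iInter fun i => ?_)
    (isClosed_iInter fun i => isClosed_iInter fun j => isClosed_iInter fun _ => ?_)
  · exact (isClosed_setOf_image_add_left_subset hΩ (P i)).preimage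
      (continuous_apply (A := fun _ => G) i)
  · exact (isClosed_setOf_interior_image_add_left_inter_eq_empty (P i) (P j)).preimage
      ((continuous_apply (A := fun _ => G) i).prodMk (continuous_apply j))

lemma isCompact_suitableSolutions [T2Space G] (hΩ : IsCompact Ω) {P : ι → Set G}
    (hP : ∀ i, (P i).Nonempty) : IsCompact (suitableSolutions Ω P) := by
  choose p hp using hP
  refine (isCompact_univ_pi fun i => (Homeomorph.addRight (p i)).isCompact_preimage.2 hΩ)
    |>.of_isClosed_subset (isClosed_suitableSolutions hΩ.isClosed P) fun Q hQ i _ => ?_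
  exact hQ.1 i ⟨p i, hp i, rfl⟩

end SuitableSolutions

def bestReplyCell {ι G : Type*} [TopologicalSpace G] [Add G] (Ω : Set G) (P : ι → Set G)
    (c : ι → G × G → ℝ) (i : ι) (Q : ι → G) : Set G :=
  {x ∈ Ω \ ⋃ j, interior ((fun p => Q j + p) '' P j) | ∀ j, j ≠ i → c i (x, Q i) < c j (x, Q j)}

section BestReplyCell

variable {ι G : Type*} [Finite ι] [TopologicalSpace G] [AddGroup G] [IsTopologicalAddGroup G]
  {P : ι → Set G}

lemma eventually_mem_bestReplyCell_iff {Ω : Set G} {c : ι → G × G → ℝ}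
    (hc : ∀ i, Continuous (c i)) {i : ι} {Q : ι → G} {x : G}
    (hfr : ∀ j, -Q j + x ∉ frontier (P j))
    (hties : ∀ j, j ≠ i → x ∈ Ω → c i (x, Q i) ≠ c j (x, Q j)) :
    ∀ᶠ Q' in 𝓝 Q, (x ∈ bestReplyCell Ω P c i Q' ↔ x ∈ bestReplyCell Ω P c i Q) := by
  by_cases hx : x ∈ Ω
  swap
  · exact .of_forall fun Q' => iff_of_false (fun h => hx h.1.1) (fun h => hx h.1.1)
  have hint : ∀ᶠ Q' in 𝓝 Q, ∀ j, (x ∈ interior ((fun p => Q' j + p) '' P j) ↔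
      x ∈ interior ((fun p => Q j + p) '' P j)) := eventually_all.2 fun j => by
    simp only [interior_image_add_left]
    exact (continuous_apply j).continuousAt.eventually
      (eventually_mem_image_add_left_iff fun h => hfr j (frontier_interior_subset h))
  have hlt : ∀ᶠ Q' in 𝓝 Q, ∀ j, (c i (x, Q' i) < c j (x, Q' j) ↔ c i (x, Q i) < c j (x, Q j)) :=
    eventually_all.2 fun j => by
      rcases eq_or_ne j i with rfl | hj
      · simp
      · exact eventually_lt_iff_of_ne
          ((hc i).comp (continuous_const.prodMk (continuous_apply i))).continuousAt
          ((hc j).comp (continuous_const.prodMk (continuous_apply j))).continuousAt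
          (hties j hj hx)
  filter_upwards [hint, hlt] with Q' hint hlt
  simp only [bestReplyCell, mem_ofPred_eq, Set.mem_sdiff, mem_iUnion, hint, hlt]

end BestReplyCell

lemma tendsto_setIntegral_of_ae_eventually_mem_iff {α ι E : Type*} [MeasurableSpace α]
    {μ : Measure α} [NormedAddCommGroup E] [NormedSpace ℝ E] {l : Filter ι}
    [l.IsCountablyGenerated] {f : α → E} (hf : Integrable f μ) {s : ι → Set α} {t : Set α}
    (hs : ∀ i, MeasurableSet (s i)) (ht : MeasurableSet t)
    (h : ∀ᵐ x ∂μ, ∀ᶠ i in l, (x ∈ s i ↔ x ∈ t)) :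
    Tendsto (fun i => ∫ x in s i, f x ∂μ) l (𝓝 (∫ x in t, f x ∂μ)) := by
  simp only [← integral_indicator (hs _), ← integral_indicator ht]
  refine tendsto_integral_filter_of_dominated_convergence (fun x => ‖f x‖)
    (.of_forall fun i => hf.1.indicator (hs i))
    (.of_forall fun i => .of_forall fun x => norm_indicator_le_norm_self _ _) hf.norm ?_
  filter_upwards [h] with x hx
  refine tendsto_const_nhds.congr' ?_
  filter_upwards [hx] with i hi using indicator_eq_indicator hi.symm rfl

lemma ae_neg_add_notMem {G : Type*} [MeasurableSpace G] [AddGroup G] [MeasurableAdd G]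
    {μ : Measure G} [μ.IsAddLeftInvariant] {s : Set G} (hs : μ s = 0) (q : G) :
    ∀ᵐ x ∂μ, -q + x ∉ s :=
  measure_eq_zero_iff_ae_notMem.1 ((measure_preimage_add μ (-q) s).trans hs)

lemma MeasurableSet.image_add_left {G : Type*} [MeasurableSpace G] [AddGroup G]
    [MeasurableAdd G] {s : Set G} (hs : MeasurableSet s) (q : G) :
    MeasurableSet ((fun p => q + p) '' s) := by
  rw [Set.image_add_left]
  exact measurable_const_add (-q) hs

section Integrals

variable {ι G E : Type*} [Fintype ι] [NormedAddCommGroup G] [MeasurableSpace G] [BorelSpace G]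
  {μ : Measure G} [μ.IsAddLeftInvariant] [NormedAddCommGroup E] [NormedSpace ℝ E]
  {f : G → E} {P : ι → Set G}

lemma continuous_setIntegral_image_add_left (hf : Integrable f μ) {s : Set G}
    (hs : MeasurableSet s) (hfr : μ (frontier s) = 0) :
    Continuous (fun q => ∫ x in (fun p => q + p) '' s, f x ∂μ) :=
  continuous_iff_continuousAt.2 fun q =>
    tendsto_setIntegral_of_ae_eventually_mem_iff hf hs.image_add_left (hs.image_add_left q)
      ((ae_neg_add_notMem hfr q).mono fun _ => eventually_mem_image_add_left_iff)

lemma continuousAt_setIntegral_iUnion_image_add_left (hf : Integrable f μ)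
    (hP : ∀ i, MeasurableSet (P i)) (hfr : ∀ i, μ (frontier (P i)) = 0) (Q : ι → G) :
    ContinuousAt (fun Q => ∫ x in ⋃ i, (fun p => Q i + p) '' P i, f x ∂μ) Q := by
  refine tendsto_setIntegral_of_ae_eventually_mem_iff hf
    (fun Q => .iUnion fun i => (hP i).image_add_left (Q i))
    (.iUnion fun i => (hP i).image_add_left (Q i)) ?_
  filter_upwards [ae_all_iff.2 fun i => ae_neg_add_notMem (hfr i) (Q i)] with x hx
  filter_upwards [eventually_all.2 fun i =>
    (continuous_apply i).continuousAt.eventually (eventually_mem_image_add_left_iff (hx i))]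
    with Q' hQ'
  simp only [mem_iUnion, hQ']

lemma measurableSet_bestReplyCell {Ω : Set G} (hΩ : MeasurableSet Ω) {c : ι → G × G → ℝ}
    (hc : ∀ i, Continuous (c i)) (i : ι) (Q : ι → G) :
    MeasurableSet (bestReplyCell Ω P c i Q) := by
  have hlt : ∀ j, MeasurableSet {x | c i (x, Q i) < c j (x, Q j)} := fun j =>
    (isOpen_lt ((hc i).comp (continuous_id.prodMk continuous_const))
      ((hc j).comp (continuous_id.prodMk continuous_const))).measurableSet
  refine (hΩ.diff (.iUnion fun j => isOpen_interior.measurableSet)).inter ?_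
  change MeasurableSet {x | ∀ j, j ≠ i → c i (x, Q i) < c j (x, Q j)}
  simp only [ofPred_forall]
  exact .iInter fun j => .iInter fun _ => hlt j

lemma continuousAt_setIntegral_bestReplyCell (hf : Integrable f μ) {Ω : Set G}
    (hΩ : MeasurableSet Ω) (hfr : ∀ j, μ (frontier (P j)) = 0) {c : ι → G × G → ℝ}
    (hc : ∀ i, Continuous (c i)) {Q : ι → G}
    (hties : ∀ i j, i ≠ j → μ {x ∈ Ω | c i (x, Q i) = c j (x, Q j)} = 0) (i : ι) :
    ContinuousAt (fun Q => ∫ x in bestReplyCell Ω P c i Q, f x ∂μ) Q := by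
  have hmeas := measurableSet_bestReplyCell (P := P) hΩ hc i
  have hties_ae : ∀ᵐ x ∂μ, ∀ j, j ≠ i → x ∈ Ω → c i (x, Q i) ≠ c j (x, Q j) :=
    ae_all_iff.2 fun j => by
      rcases eq_or_ne j i with rfl | hj
      · exact .of_forall fun _ h => absurd rfl h
      · filter_upwards [measure_eq_zero_iff_ae_notMem.1 (hties i j hj.symm)] with x hx _ hxΩ
          using fun heq => hx ⟨hxΩ, heq⟩
  refine tendsto_setIntegral_of_ae_eventually_mem_iff hf hmeas (hmeas Q) ?_
  filter_upwards [ae_all_iff.2 fun j => ae_neg_add_notMem (hfr j) (Q j), hties_ae]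
    with x hx hx'
  exact eventually_mem_bestReplyCell_iff hc hx hx'

end Integrals

theorem bilevel_problem_has_optimal_solution_general
    (ρ : ℕ) (Ω : Set (EuclideanSpace ℝ (Fin 2))) (hΩ : IsCompact Ω)
    (P : Fin ρ → Set (EuclideanSpace ℝ (Fin 2)))
    (hPc : ∀ i, IsCompact (P i)) (hPne : ∀ i, (P i).Nonempty)
    (hPfr : ∀ i, volume (frontier (P i)) = 0)
    (u : Fin ρ → EuclideanSpace ℝ (Fin 2) × EuclideanSpace ℝ (Fin 2) → ℝ)
    (hu : ∀ i, Continuous (u i))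
    (a : Fin ρ → ℝ)
    (D B : EuclideanSpace ℝ (Fin 2) → ℝ)
    (hD : Integrable D)
    (hB : Integrable B)
    (Γ : Set (Fin ρ → EuclideanSpace ℝ (Fin 2)))
    (hΓ : Γ = {Q | (∀ i, (fun p => Q i + p) '' P i ⊆ Ω) ∧
      ∀ i j, i ≠ j →
        interior ((fun p => Q i + p) '' P i) ∩
          interior ((fun p => Q j + p) '' P j) = ∅})
    (hΓne : Γ.Nonempty)
    (hties : ∀ Q ∈ Γ, ∀ i j, i ≠ j →
      volume {q ∈ Ω | a i + u i (q, Q i) = a j + u j (q, Q j)} = 0)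
    (Ahat : Fin ρ → (Fin ρ → EuclideanSpace ℝ (Fin 2)) →
      Set (EuclideanSpace ℝ (Fin 2)))
    (hAhat : ∀ i Q, Ahat i Q =
      {q ∈ Ω \ ⋃ j, interior ((fun p => Q j + p) '' P j) |
        ∀ j, j ≠ i → a i + u i (q, Q i) < a j + u j (q, Q j)})
    (I C : Fin ρ → ℝ → ℝ) (L : ℝ → ℝ)
    (hI : ∀ i, Continuous (I i)) (hC : ∀ i, Continuous (C i)) (hL : Continuous L)
    (F : (Fin ρ → EuclideanSpace ℝ (Fin 2)) → ℝ)
    (hF : ∀ Q, F Q =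
      (∑ i, (I i (∫ q in (fun p => Q i + p) '' P i, B q) +
             C i (∫ q in Ahat i Q, D q))) +
      L (∫ q in ⋃ i, (fun p => Q i + p) '' P i, D q)) :
    ∃ Qstar ∈ Γ, ∀ Q ∈ Γ, F Qstar ≤ F Q := by
  obtain rfl : Ahat = bestReplyCell Ω P fun i z => a i + u i z := funext fun i => funext (hAhat i)
  subst hΓ
  have hPm : ∀ i, MeasurableSet (P i) := fun i => (hPc i).isClosed.measurableSet
  have hFc : ContinuousOn F (suitableSolutions Ω P) := fun Q hQ => by
    have hIB i := (continuous_setIntegral_image_add_left hB (hPm i) (hPfr i)).comp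
      (continuous_apply (A := fun _ => EuclideanSpace ℝ (Fin 2)) i)
    have hCD := continuousAt_setIntegral_bestReplyCell hD hΩ.isClosed.measurableSet hPfr
      (fun i => continuous_const.add (hu i)) (hties Q hQ)
    have hLD := continuousAt_setIntegral_iUnion_image_add_left hD hPm hPfr Q
    rw [funext hF]
    refine ContinuousAt.continuousWithinAt
      (.add (tendsto_finsetSum _ fun i _ => ?_) (hL.continuousAt.comp hLD))
    exact ((hI i).comp (hIB i)).continuousAt.add ((hC i).continuousAt.comp (hCD i))
  obtain ⟨Q, hQ, hmin⟩ := (isCompact_suitableSolutions hΩ hPne).exists_isMinOn hΓne hFc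
  exact ⟨Q, hQ, hmin⟩

/-- existence of an optimal solution of the bilevel location-allocation
problem BL. With `Γ` the (nonempty) set of suitable solutions,
`Â_i(Q)` the best-reply cells, and
`F(Q) = ∑ i [I_i(∫_{q_i+P_i} B) + C_i(∫_{Â_i(Q)} D)] + L(∫_{⋃ i (q_i+P_i)} D)`,
there exists `Q* ∈ Γ` with `F(Q*) ≤ F(Q)` for all `Q ∈ Γ`. -/
theorem bilevel_problem_has_optimal_solution
    (ρ : ℕ) (Ω : Set (EuclideanSpace ℝ (Fin 2))) (hΩ : IsCompact Ω)
    (P : Fin ρ → Set (EuclideanSpace ℝ (Fin 2)))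
    (hPc : ∀ i, IsCompact (P i)) (hPne : ∀ i, (P i).Nonempty)
    (hPfr : ∀ i, volume (frontier (P i)) = 0)
    (u : Fin ρ → EuclideanSpace ℝ (Fin 2) × EuclideanSpace ℝ (Fin 2) → ℝ)
    (hu : ∀ i, Continuous (u i))
    (a : Fin ρ → ℝ)
    (D B : EuclideanSpace ℝ (Fin 2) → ℝ)
    (hD0 : ∀ q, 0 ≤ D q) (hD : Integrable D)
    (hB0 : ∀ q, 0 ≤ B q) (hB : Integrable B)
    (Γ : Set (Fin ρ → EuclideanSpace ℝ (Fin 2)))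
    (hΓ : Γ = {Q | (∀ i, (fun p => Q i + p) '' P i ⊆ Ω) ∧
      ∀ i j, i ≠ j →
        interior ((fun p => Q i + p) '' P i) ∩
          interior ((fun p => Q j + p) '' P j) = ∅})
    (hΓne : Γ.Nonempty)
    (hties : ∀ Q ∈ Γ, ∀ i j, i ≠ j →
      volume {q ∈ Ω | a i + u i (q, Q i) = a j + u j (q, Q j)} = 0)
    (Ahat : Fin ρ → (Fin ρ → EuclideanSpace ℝ (Fin 2)) →
      Set (EuclideanSpace ℝ (Fin 2)))
    (hAhat : ∀ i Q, Ahat i Q =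
      {q ∈ Ω \ ⋃ j, interior ((fun p => Q j + p) '' P j) |
        ∀ j, j ≠ i → a i + u i (q, Q i) < a j + u j (q, Q j)})
    (I C : Fin ρ → ℝ → ℝ) (L : ℝ → ℝ)
    (hI : ∀ i, Continuous (I i)) (hC : ∀ i, Continuous (C i)) (hL : Continuous L)
    (F : (Fin ρ → EuclideanSpace ℝ (Fin 2)) → ℝ)
    (hF : ∀ Q, F Q =
      (∑ i, (I i (∫ q in (fun p => Q i + p) '' P i, B q) +
             C i (∫ q in Ahat i Q, D q))) +
      L (∫ q in ⋃ i, (fun p => Q i + p) '' P i, D q)) :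
    ∃ Qstar ∈ Γ, ∀ Q ∈ Γ, F Qstar ≤ F Q :=
  bilevel_problem_has_optimal_solution_general ρ Ω hΩ P hPc hPne hPfr u hu a D B hD hB Γ hΓ hΓne
    hties Ahat hAhat I C L hI hC hL F hF
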